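/- arXiv:2502.01545 — 2 statements merged into one kernel-verified Lean document; each statement's English description precedes it below -/
import Mathlib

section
/- State distinguishability from an initialization window of length q + s − 1: let a linear time-invariant descriptor system in quasi-Weierstrass form with matrices A1 ∈ ℝ^{q×q}, C1 ∈ ℝ^{p×q}, nilpotent N ∈ ℝ^{r×r} with N^s = 0, and C2 ∈ ℝ^{p×r} be R-observable. Suppose sequences x1 : {1,…,q+s} → ℝ^q and x2 : {1,…,q+s} → ℝ^r satisfy the zero-input recursions x1(t+1) = A1 x1(t) and N x2(t+1) = x2(t) for all t = 1,…,q+s−1, and the outputs vanish on the window: C1 x1(t) + C2 x2(t) = 0 for all t = 1,…,q. Then x1(t) = 0 for all t = 1,…,q+s. Consequently, the latent dynamic state of an R-observable descriptor system is uniquely determined by any input-output trajectory over a horizon of length at least T_ini = q + s − 1. -/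
open Matrix

section Aux

variable {q p : ℕ}

/-- Sum of matrices applied to a vector. -/
private lemma sum_mulVec' {m n : Type*} [Fintype n] {R : Type*} [NonUnitalNonAssocSemiring R]
    {ι : Type*} (t : Finset ι) (f : ι → Matrix m n R) (v : n → R) :
    (∑ i ∈ t, f i) *ᵥ v = ∑ i ∈ t, (f i *ᵥ v) :=
  map_sum (Matrix.mulVec.addMonoidHomLeft v) f t

/-- PBH full-rank condition forbids eigenvectors of `M` inside `ker C`. -/
private lemma pbh_no_eigvec (M : Matrix (Fin q) (Fin q) ℂ) (C : Matrix (Fin p) (Fin q) ℂ)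
    (hobs : ∀ lam : ℂ,
      (Matrix.fromCols (Mᵀ - lam • (1 : Matrix (Fin q) (Fin q) ℂ)) Cᵀ).rank = q)
    (lam : ℂ) (v : Fin q → ℂ) (hMv : M *ᵥ v = lam • v) (hCv : C *ᵥ v = 0) : v = 0 := by
  by_contra hv
  set A := Matrix.fromCols (Mᵀ - lam • (1 : Matrix (Fin q) (Fin q) ℂ)) Cᵀ with hA
  have hvA : Aᵀ *ᵥ v = 0 := by
    rw [Matrix.mulVec_transpose, hA, Matrix.vecMul_fromCols]
    have h1 : v ᵥ* (Mᵀ - lam • (1 : Matrix (Fin q) (Fin q) ℂ)) = 0 := by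
      have h1t : (Mᵀ - lam • (1 : Matrix (Fin q) (Fin q) ℂ))
          = (M - lam • (1 : Matrix (Fin q) (Fin q) ℂ))ᵀ := by
        rw [Matrix.transpose_sub, Matrix.transpose_smul, Matrix.transpose_one]
      rw [h1t, Matrix.vecMul_transpose, Matrix.sub_mulVec, hMv,
        Matrix.smul_mulVec, Matrix.one_mulVec, sub_self]
    have h2 : v ᵥ* Cᵀ = 0 := by rw [Matrix.vecMul_transpose, hCv]
    rw [h1, h2]
    ext i; cases i <;> simp
  have hker : v ∈ LinearMap.ker (Aᵀ).mulVecLin := by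
    simpa [Matrix.mulVecLin, Matrix.mulVec_transpose] using hvA
  have hnt : Nontrivial (LinearMap.ker (Aᵀ).mulVecLin) :=
    ⟨⟨⟨v, hker⟩, 0, by simp [hv, Submodule.mk_eq_zero]⟩⟩
  have hpos : 0 < Module.finrank ℂ (LinearMap.ker (Aᵀ).mulVecLin) :=
    Module.finrank_pos
  have hrn := LinearMap.finrank_range_add_finrank_ker (Aᵀ).mulVecLin
  have hdom : Module.finrank ℂ (Fin q → ℂ) = q := by simp
  have hrt : (Aᵀ).rank = A.rank := Matrix.rank_transpose A
  have hAq : A.rank = q := hobs lam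
  have : (Aᵀ).rank = q := by rw [hrt, hAq]
  rw [Matrix.rank] at this
  omega

/-- If `C M^k v = 0` for all `k`, the PBH condition forces `v = 0`. -/
private lemma unobs_eq_zero (M : Matrix (Fin q) (Fin q) ℂ) (C : Matrix (Fin p) (Fin q) ℂ)
    (hobs : ∀ lam : ℂ,
      (Matrix.fromCols (Mᵀ - lam • (1 : Matrix (Fin q) (Fin q) ℂ)) Cᵀ).rank = q)
    (v : Fin q → ℂ) (hv : ∀ k : ℕ, C *ᵥ (M ^ k *ᵥ v) = 0) : v = 0 := by
  by_contra hv0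
  set U : Submodule ℂ (Fin q → ℂ) :=
    ⨅ k : ℕ, LinearMap.ker (C.mulVecLin ∘ₗ (M ^ k).mulVecLin) with hU
  have hvU : v ∈ U := by
    rw [hU]
    refine Submodule.mem_iInf _ |>.mpr fun k => ?_
    simpa [Matrix.mulVecLin] using hv k
  have hUinv : ∀ x ∈ U, M.mulVecLin x ∈ U := by
    intro x hx
    rw [hU, Submodule.mem_iInf] at hx ⊢
    intro k
    have hk := hx (k + 1)
    simp only [LinearMap.mem_ker, LinearMap.comp_apply, Matrix.mulVecLin_apply] at hk ⊢
    have : M ^ k *ᵥ (M *ᵥ x) = M ^ (k + 1) *ᵥ x := by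
      rw [Matrix.mulVec_mulVec, ← pow_succ]
    rw [this, hk]
  have hnt : Nontrivial U := ⟨⟨⟨v, hvU⟩, 0, by simp [hv0, Submodule.mk_eq_zero]⟩⟩
  let f : Module.End ℂ U := (M.mulVecLin).restrict hUinv
  obtain ⟨μ, hμ⟩ := Module.End.exists_eigenvalue f
  obtain ⟨u, hu⟩ := hμ.exists_hasEigenvector
  have hufu : f u = μ • u := hu.apply_eq_smul
  have hMu : M *ᵥ (u : Fin q → ℂ) = μ • (u : Fin q → ℂ) := by
    have := congrArg (Subtype.val) hufu
    simpa [f, LinearMap.restrict_apply, Matrix.mulVecLin_apply] using this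
  have hCu : C *ᵥ (u : Fin q → ℂ) = 0 := by
    have hm := (Submodule.mem_iInf _).mp u.2 0
    simpa [Matrix.mulVecLin, Matrix.one_mulVec] using hm
  have : (u : Fin q → ℂ) = 0 := pbh_no_eigvec M C hobs μ u hMu hCu
  exact hu.right (by simpa [Submodule.coe_eq_zero] using this)

/-- Cayley–Hamilton: vanishing of `C M^k v` on the window `k < q` extends to all `k`. -/
private lemma window_to_all (hq : 1 ≤ q) (M : Matrix (Fin q) (Fin q) ℂ)
    (C : Matrix (Fin p) (Fin q) ℂ) (v : Fin q → ℂ)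
    (hv : ∀ k < q, C *ᵥ (M ^ k *ᵥ v) = 0) : ∀ k : ℕ, C *ᵥ (M ^ k *ᵥ v) = 0 := by
  -- Cayley–Hamilton: M^q is a combination of lower powers
  have hdeg : M.charpoly.natDegree = q := by
    rw [Matrix.charpoly_natDegree_eq_dim, Fintype.card_fin]
  have hCH : (M ^ q : Matrix (Fin q) (Fin q) ℂ)
      = ∑ i ∈ Finset.range q, (-(M.charpoly.coeff i)) • M ^ i := by
    have h0 := Matrix.aeval_self_charpoly M
    have hsum := M.charpoly_monic.as_sum
    rw [hsum] at h0
    simp only [map_add, map_pow, Polynomial.aeval_X, map_sum, _root_.map_mul,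
      Polynomial.aeval_C, hdeg] at h0
    have h1 : M ^ q
        = -∑ i ∈ Finset.range q, (algebraMap ℂ _ (M.charpoly.coeff i)) * M ^ i :=
      eq_neg_of_add_eq_zero_left h0
    rw [h1, ← Finset.sum_neg_distrib]
    refine Finset.sum_congr rfl fun i _ => ?_
    simp [Algebra.smul_def]
  -- The Krylov space spanned by the first q iterates
  set W : Submodule ℂ (Fin q → ℂ) :=
    Submodule.span ℂ (Set.range fun i : Fin q => M ^ (i : ℕ) *ᵥ v) with hW
  have hgen : ∀ i : Fin q, M ^ (i : ℕ) *ᵥ v ∈ W := fun i =>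
    Submodule.subset_span ⟨i, rfl⟩
  have hWinv : ∀ x ∈ W, M *ᵥ x ∈ W := by
    intro x hx
    have : W ≤ Submodule.comap M.mulVecLin W := by
      rw [hW, Submodule.span_le]
      rintro _ ⟨i, rfl⟩
      simp only [SetLike.mem_coe, Submodule.mem_comap, Matrix.mulVecLin_apply]
      have hstep : M *ᵥ (M ^ (i : ℕ) *ᵥ v) = M ^ ((i : ℕ) + 1) *ᵥ v := by
        rw [Matrix.mulVec_mulVec, ← pow_succ']
      rw [hstep]
      by_cases hi : (i : ℕ) + 1 < q
      · exact hgen ⟨(i : ℕ) + 1, hi⟩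
      · have hiq : (i : ℕ) + 1 = q := by omega
        rw [hiq, hCH, sum_mulVec']
        refine Submodule.sum_mem _ fun j hj => ?_
        rw [Matrix.smul_mulVec]
        exact Submodule.smul_mem _ _ (hgen ⟨j, Finset.mem_range.mp hj⟩)
    have := this hx
    simpa [Matrix.mulVecLin_apply] using this
  have hCW : ∀ x ∈ W, C *ᵥ x = 0 := by
    intro x hx
    have : W ≤ LinearMap.ker C.mulVecLin := by
      rw [hW, Submodule.span_le]
      rintro _ ⟨i, rfl⟩
      simpa [Matrix.mulVecLin] using hv (i : ℕ) i.2
    simpa [Matrix.mulVecLin] using this hx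
  have hmem : ∀ k : ℕ, M ^ k *ᵥ v ∈ W := by
    intro k
    induction k with
    | zero => simpa [Matrix.one_mulVec] using hgen ⟨0, hq⟩
    | succ n ih =>
      have : M *ᵥ (M ^ n *ᵥ v) ∈ W := hWinv _ ih
      rwa [Matrix.mulVec_mulVec, ← pow_succ'] at this
  exact fun k => hCW _ (hmem k)

end Aux

/-- State distinguishability from an initialization window of length
`q + s - 1`: for an R-observable descriptor system in quasi-Weierstrass form
with nilpotent `N` satisfying `N^s = 0`, any zero-input state trajectories
`x1`, `x2` on the window `0, …, q+s-1` whose outputs vanish on the first `q`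
time steps must have vanishing dynamic state `x1` on the whole window. -/
theorem state_distinguishability
    (q r s p : ℕ) (hq : 1 ≤ q) (hr : 1 ≤ r) (hs : 1 ≤ s)
    (A1 : Matrix (Fin q) (Fin q) ℝ) (C1 : Matrix (Fin p) (Fin q) ℝ)
    (Nm : Matrix (Fin r) (Fin r) ℝ) (C2 : Matrix (Fin p) (Fin r) ℝ)
    (hNil : Nm ^ s = 0)
    (hobs : ∀ lam : ℂ,
      (Matrix.fromCols
        (A1.transpose.map Complex.ofReal - lam • (1 : Matrix (Fin q) (Fin q) ℂ))
        (C1.transpose.map Complex.ofReal)).rank = q)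
    (x1 : ℕ → Fin q → ℝ) (x2 : ℕ → Fin r → ℝ)
    (hx1 : ∀ t, t + 1 < q + s → x1 (t + 1) = A1 *ᵥ x1 t)
    (hx2 : ∀ t, t + 1 < q + s → Nm *ᵥ x2 (t + 1) = x2 t)
    (hy : ∀ t, t < q → C1 *ᵥ x1 t + C2 *ᵥ x2 t = 0) :
    ∀ t, t < q + s → x1 t = 0 := by
  -- Step 1: x2 vanishes on the first q steps
  have hx2back : ∀ t, ∀ j, t + j < q + s → x2 t = Nm ^ j *ᵥ x2 (t + j) := by
    intro t j
    induction j with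
    | zero => intro _; simp [Matrix.one_mulVec]
    | succ n ih =>
      intro hlt
      have h1 : t + n < q + s := by omega
      have h2 : (t + n) + 1 < q + s := by omega
      rw [ih h1, ← hx2 (t + n) h2, Matrix.mulVec_mulVec, ← pow_succ,
        show t + n + 1 = t + (n + 1) by omega]
  have hx2zero : ∀ t, t < q → x2 t = 0 := by
    intro t ht
    have := hx2back t s (by omega)
    rw [hNil] at this
    simpa using this
  -- Step 2: outputs give C1 A1^t x1 0 = 0 for t < q
  have hx1pow : ∀ t, t < q + s → x1 t = A1 ^ t *ᵥ x1 0 := by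
    intro t
    induction t with
    | zero => intro _; simp [Matrix.one_mulVec]
    | succ n ih =>
      intro hlt
      rw [hx1 n hlt, ih (by omega), Matrix.mulVec_mulVec, ← pow_succ']
  have hwin : ∀ t < q, C1 *ᵥ (A1 ^ t *ᵥ x1 0) = 0 := by
    intro t ht
    have h1 := hy t ht
    rw [hx2zero t ht, Matrix.mulVec_zero, add_zero] at h1
    rw [← hx1pow t (by omega)]
    exact h1
  -- Step 3: complexify and apply PBH observability
  set Mc : Matrix (Fin q) (Fin q) ℂ := A1.map Complex.ofReal with hMc
  set Cc : Matrix (Fin p) (Fin q) ℂ := C1.map Complex.ofReal with hCc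
  set vc : Fin q → ℂ := fun i => ((x1 0 i : ℝ) : ℂ) with hvc
  have hmapow : ∀ k : ℕ, Mc ^ k = (A1 ^ k).map Complex.ofReal := by
    intro k
    have : (Complex.ofRealHom.mapMatrix (A1 ^ k) : Matrix (Fin q) (Fin q) ℂ)
        = (Complex.ofRealHom.mapMatrix A1) ^ k := map_pow _ _ _
    exact this.symm
  have hmulc : ∀ (m' : ℕ) (B : Matrix (Fin m') (Fin q) ℝ) (w : Fin q → ℝ),
      (B.map Complex.ofReal) *ᵥ (fun i => ((w i : ℝ) : ℂ))
        = fun i => (((B *ᵥ w) i : ℝ) : ℂ) := by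
    intro m' B w
    funext i
    exact (RingHom.map_mulVec Complex.ofRealHom B w i).symm
  have hwinc : ∀ k < q, Cc *ᵥ (Mc ^ k *ᵥ vc) = 0 := by
    intro k hk
    rw [hmapow k, hvc]
    rw [hmulc q (A1 ^ k) (x1 0)]
    rw [hCc, hmulc p C1 (A1 ^ k *ᵥ x1 0)]
    funext i
    rw [hwin k hk]
    simp
  have hobs' : ∀ lam : ℂ,
      (Matrix.fromCols (Mcᵀ - lam • (1 : Matrix (Fin q) (Fin q) ℂ)) Ccᵀ).rank = q := by
    intro lam
    have h1 : Mcᵀ = A1ᵀ.map Complex.ofReal := by rw [hMc, Matrix.transpose_map]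
    have h2 : Ccᵀ = C1ᵀ.map Complex.ofReal := by rw [hCc, Matrix.transpose_map]
    rw [h1, h2]
    exact hobs lam
  have hvc0 : vc = 0 :=
    unobs_eq_zero Mc Cc hobs' vc (window_to_all hq Mc Cc vc hwinc)
  have hx10 : x1 0 = 0 := by
    funext i
    have h := congrFun hvc0 i
    simp only [hvc, Pi.zero_apply, Complex.ofReal_eq_zero] at h
    simpa using h
  intro t ht
  rw [hx1pow t ht, hx10, Matrix.mulVec_zero]
end

section
/- Dimension of the finite-horizon behavior of the DC-OPF descriptor system: consider the DC-OPF model with sampling period δ > 0, invertible reduced susceptance matrix B̃ ∈ ℝ^{(n−1)×(n−1)}, branch matrix B̃_f ∈ ℝ^{m×(n−1)}, and selection matrices C̃_s ∈ ℝ^{q×n_u}, C̃_g ∈ ℝ^{(n−1)×n_u}, C̃_d ∈ ℝ^{(n−1)×n_w}. For a horizon L ≥ 1, the set of all input-disturbance-output triples (u, w, y), with u : {0,…,L−1} → ℝ^{n_u}, w : {0,…,L−1} → ℝ^{n_w}, y : {0,…,L−1} → ℝ^{q+1+m}, for which there exist e : {0,…,L−1} → ℝ^q and θ̃ : {0,…,L−1}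 → ℝ^{n−1} satisfying e(k+1) = e(k) − δ C̃_s u(k) for k = 0,…,L−2, B̃ θ̃(k) = C̃_g u(k) − C̃_d w(k) for k = 0,…,L−1, and y(k) = (e(k), 1ᵀw(k) − 1ᵀu(k), B̃_f θ̃(k)) for k = 0,…,L−1, is a linear subspace of ℝ^{L(n_u+n_w+q+1+m)} of dimension exactly L(n_u + n_w) + q. -/
open Matrix

/-- The output of the DC-OPF descriptor system: the storage states `e`, the
slack generation, and the `m` branch power flows, stacked in `ℝ^{q+1+m}`. -/
def dcOutput (q m : ℕ) (e : Fin q → ℝ) (slack : ℝ) (f : Fin m → ℝ) :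
    Fin (q + 1 + m) → ℝ :=
  Fin.append (Fin.append e (fun _ : Fin 1 => slack)) f

namespace DCOPFAux

lemma fin_append_add {p r : ℕ} (a b : Fin p → ℝ) (c d : Fin r → ℝ) :
    Fin.append (a + b) (c + d) = Fin.append a c + Fin.append b d := by
  funext i
  induction i using Fin.addCases with
  | left i => simp [Fin.append_left]
  | right i => simp [Fin.append_right]

lemma fin_append_smul {p r : ℕ} (t : ℝ) (a : Fin p → ℝ) (c : Fin r → ℝ) :
    Fin.append (t • a) (t • c) = t • Fin.append a c := by
  funext i
  induction i using Fin.addCases with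
  | left i => simp [Fin.append_left]
  | right i => simp [Fin.append_right]

lemma dcOutput_add (q m : ℕ) (e e' : Fin q → ℝ) (s s' : ℝ) (f f' : Fin m → ℝ) :
    dcOutput q m (e + e') (s + s') (f + f') = dcOutput q m e s f + dcOutput q m e' s' f' := by
  unfold dcOutput
  rw [show (fun _ : Fin 1 => s + s') = (fun _ : Fin 1 => s) + (fun _ : Fin 1 => s') from rfl,
    fin_append_add, fin_append_add]

lemma dcOutput_smul (q m : ℕ) (t : ℝ) (e : Fin q → ℝ) (s : ℝ) (f : Fin m → ℝ) :
    dcOutput q m (t • e) (t * s) (t • f) = t • dcOutput q m e s f := by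
  unfold dcOutput
  rw [show (fun _ : Fin 1 => t * s) = t • (fun _ : Fin 1 => s) from rfl,
    fin_append_smul, fin_append_smul]

lemma dcOutput_left (q m : ℕ) (e : Fin q → ℝ) (s : ℝ) (f : Fin m → ℝ) (j : Fin q) :
    dcOutput q m e s f (Fin.castAdd m (Fin.castAdd 1 j)) = e j := by
  unfold dcOutput
  rw [Fin.append_left, Fin.append_left]

/-- The explicit state trajectory determined by the initial state `e0` and input `u`. -/
noncomputable def efun (q nu L : ℕ) (δ : ℝ) (Cs : Matrix (Fin q) (Fin nu) ℝ)
    (u : Fin L → Fin nu → ℝ) (e0 : Fin q → ℝ) (k : ℕ) : Fin q → ℝ :=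
  e0 - δ • (Cs *ᵥ ∑ i ∈ Finset.range k, (if h : i < L then u ⟨i, h⟩ else 0))

lemma efun_zero (q nu L : ℕ) (δ : ℝ) (Cs : Matrix (Fin q) (Fin nu) ℝ)
    (u : Fin L → Fin nu → ℝ) (e0 : Fin q → ℝ) :
    efun q nu L δ Cs u e0 0 = e0 := by
  simp [efun]

lemma efun_succ (q nu L : ℕ) (δ : ℝ) (Cs : Matrix (Fin q) (Fin nu) ℝ)
    (u : Fin L → Fin nu → ℝ) (e0 : Fin q → ℝ) (k : ℕ) (h : k < L) :
    efun q nu L δ Cs u e0 (k + 1) = efun q nu L δ Cs u e0 k - δ • (Cs *ᵥ u ⟨k, h⟩) := by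
  unfold efun
  rw [Finset.sum_range_succ, dif_pos h, Matrix.mulVec_add, smul_add, ← sub_sub]

lemma efun_add (q nu L : ℕ) (δ : ℝ) (Cs : Matrix (Fin q) (Fin nu) ℝ)
    (u u' : Fin L → Fin nu → ℝ) (e0 e0' : Fin q → ℝ) (k : ℕ) :
    efun q nu L δ Cs (u + u') (e0 + e0') k
      = efun q nu L δ Cs u e0 k + efun q nu L δ Cs u' e0' k := by
  unfold efun
  have hs : (∑ i ∈ Finset.range k, (if h : i < L then (u + u') ⟨i, h⟩ else 0))
      = (∑ i ∈ Finset.range k, (if h : i < L then u ⟨i, h⟩ else 0))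
      + (∑ i ∈ Finset.range k, (if h : i < L then u' ⟨i, h⟩ else 0)) := by
    rw [← Finset.sum_add_distrib]
    refine Finset.sum_congr rfl fun i _ => ?_
    split <;> simp
  rw [hs, Matrix.mulVec_add, smul_add, sub_add_sub_comm]

lemma efun_smul (q nu L : ℕ) (δ : ℝ) (Cs : Matrix (Fin q) (Fin nu) ℝ)
    (t : ℝ) (u : Fin L → Fin nu → ℝ) (e0 : Fin q → ℝ) (k : ℕ) :
    efun q nu L δ Cs (t • u) (t • e0) k = t • efun q nu L δ Cs u e0 k := by
  unfold efun
  have hs : (∑ i ∈ Finset.range k, (if h : i < L then (t • u) ⟨i, h⟩ else 0))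
      = t • ∑ i ∈ Finset.range k, (if h : i < L then u ⟨i, h⟩ else 0) := by
    rw [Finset.smul_sum]
    refine Finset.sum_congr rfl fun i _ => ?_
    split <;> simp
  rw [hs, Matrix.mulVec_smul, smul_comm δ t, smul_sub]

/-- The linear parametrization of the behavior by `(u, w, e₀)`. -/
noncomputable def phi (q nu nw n m L : ℕ) (δ : ℝ)
    (Bt : Matrix (Fin (n - 1)) (Fin (n - 1)) ℝ) (Bf : Matrix (Fin m) (Fin (n - 1)) ℝ)
    (Cs : Matrix (Fin q) (Fin nu) ℝ) (Cg : Matrix (Fin (n - 1)) (Fin nu) ℝ)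
    (Cd : Matrix (Fin (n - 1)) (Fin nw) ℝ) :
    ((Fin L → Fin nu → ℝ) × (Fin L → Fin nw → ℝ) × (Fin q → ℝ)) →ₗ[ℝ]
      ((Fin L → Fin nu → ℝ) × (Fin L → Fin nw → ℝ) × (Fin L → Fin (q + 1 + m) → ℝ)) where
  toFun p := (p.1, p.2.1, fun k =>
    dcOutput q m (efun q nu L δ Cs p.1 p.2.2 k.1)
      ((∑ j, p.2.1 k j) - ∑ j, p.1 k j)
      (Bf *ᵥ (Bt⁻¹ *ᵥ (Cg *ᵥ p.1 k - Cd *ᵥ p.2.1 k))))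
  map_add' p p' := by
    refine Prod.ext rfl (Prod.ext rfl ?_)
    funext k
    show dcOutput q m (efun q nu L δ Cs (p.1 + p'.1) (p.2.2 + p'.2.2) k.1)
        ((∑ j, (p.2.1 k j + p'.2.1 k j)) - ∑ j, (p.1 k j + p'.1 k j))
        (Bf *ᵥ (Bt⁻¹ *ᵥ (Cg *ᵥ (p.1 k + p'.1 k) - Cd *ᵥ (p.2.1 k + p'.2.1 k))))
      = dcOutput q m (efun q nu L δ Cs p.1 p.2.2 k.1)
          ((∑ j, p.2.1 k j) - ∑ j, p.1 k j)
          (Bf *ᵥ (Bt⁻¹ *ᵥ (Cg *ᵥ p.1 k - Cd *ᵥ p.2.1 k)))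
        + dcOutput q m (efun q nu L δ Cs p'.1 p'.2.2 k.1)
          ((∑ j, p'.2.1 k j) - ∑ j, p'.1 k j)
          (Bf *ᵥ (Bt⁻¹ *ᵥ (Cg *ᵥ p'.1 k - Cd *ᵥ p'.2.1 k)))
    have h1 : efun q nu L δ Cs (p.1 + p'.1) (p.2.2 + p'.2.2) k.1
        = efun q nu L δ Cs p.1 p.2.2 k.1 + efun q nu L δ Cs p'.1 p'.2.2 k.1 :=
      efun_add _ _ _ _ _ _ _ _ _ _
    have h2 : ((∑ j, (p.2.1 k j + p'.2.1 k j)) - ∑ j, (p.1 k j + p'.1 k j))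
        = ((∑ j, p.2.1 k j) - ∑ j, p.1 k j) + ((∑ j, p'.2.1 k j) - ∑ j, p'.1 k j) := by
      rw [Finset.sum_add_distrib, Finset.sum_add_distrib]; ring
    have h3 : (Bf *ᵥ (Bt⁻¹ *ᵥ (Cg *ᵥ (p.1 k + p'.1 k) - Cd *ᵥ (p.2.1 k + p'.2.1 k))))
        = (Bf *ᵥ (Bt⁻¹ *ᵥ (Cg *ᵥ p.1 k - Cd *ᵥ p.2.1 k)))
          + (Bf *ᵥ (Bt⁻¹ *ᵥ (Cg *ᵥ p'.1 k - Cd *ᵥ p'.2.1 k))) := by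
      rw [Matrix.mulVec_add, Matrix.mulVec_add, ← sub_add_sub_comm,
        Matrix.mulVec_add, Matrix.mulVec_add]
    rw [h1, h2, h3, dcOutput_add]
  map_smul' t p := by
    refine Prod.ext rfl (Prod.ext rfl ?_)
    funext k
    show dcOutput q m (efun q nu L δ Cs (t • p.1) (t • p.2.2) k.1)
        ((∑ j, t * p.2.1 k j) - ∑ j, t * p.1 k j)
        (Bf *ᵥ (Bt⁻¹ *ᵥ (Cg *ᵥ (t • p.1 k) - Cd *ᵥ (t • p.2.1 k))))
      = t • dcOutput q m (efun q nu L δ Cs p.1 p.2.2 k.1)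
          ((∑ j, p.2.1 k j) - ∑ j, p.1 k j)
          (Bf *ᵥ (Bt⁻¹ *ᵥ (Cg *ᵥ p.1 k - Cd *ᵥ p.2.1 k)))
    have h1 : efun q nu L δ Cs (t • p.1) (t • p.2.2) k.1
        = t • efun q nu L δ Cs p.1 p.2.2 k.1 := efun_smul _ _ _ _ _ _ _ _ _
    have h2 : ((∑ j, t * p.2.1 k j) - ∑ j, t * p.1 k j)
        = t * ((∑ j, p.2.1 k j) - ∑ j, p.1 k j) := by
      rw [← Finset.mul_sum, ← Finset.mul_sum]; ring
    have h3 : (Bf *ᵥ (Bt⁻¹ *ᵥ (Cg *ᵥ (t • p.1 k) - Cd *ᵥ (t • p.2.1 k))))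
        = t • (Bf *ᵥ (Bt⁻¹ *ᵥ (Cg *ᵥ p.1 k - Cd *ᵥ p.2.1 k))) := by
      rw [Matrix.mulVec_smul, Matrix.mulVec_smul, ← smul_sub,
        Matrix.mulVec_smul, Matrix.mulVec_smul]
    rw [h1, h2, h3, dcOutput_smul]

end DCOPFAux

open DCOPFAux in
/-- Dimension of the finite-horizon behavior of the DC-OPF descriptor system:
for a horizon `L ≥ 1`, the set of input-disturbance-output triples `(u, w, y)`
over `{0, …, L-1}` that are compatible with the storage dynamics, the DC power
flow equations (with invertible reduced susceptance matrix `B̃`), and the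
output map, is a linear subspace of dimension exactly `L(n_u + n_w) + q`. -/
theorem dcopf_behavior_dimension
    (q nu nw n m L : ℕ) (hL : 1 ≤ L) (δ : ℝ) (hδ : 0 < δ)
    (Bt : Matrix (Fin (n - 1)) (Fin (n - 1)) ℝ) (hB : IsUnit Bt)
    (Bf : Matrix (Fin m) (Fin (n - 1)) ℝ)
    (Cs : Matrix (Fin q) (Fin nu) ℝ)
    (Cg : Matrix (Fin (n - 1)) (Fin nu) ℝ)
    (Cd : Matrix (Fin (n - 1)) (Fin nw) ℝ) :
    ∃ S : Submodule ℝ ((Fin L → Fin nu → ℝ) × (Fin L → Fin nw → ℝ) ×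
        (Fin L → Fin (q + 1 + m) → ℝ)),
      (S : Set ((Fin L → Fin nu → ℝ) × (Fin L → Fin nw → ℝ) ×
          (Fin L → Fin (q + 1 + m) → ℝ))) =
        {uwy | ∃ e : ℕ → Fin q → ℝ, ∃ θ : Fin L → Fin (n - 1) → ℝ,
          (∀ (k : ℕ) (h : k + 1 < L),
            e (k + 1) = e k - δ • (Cs *ᵥ uwy.1 ⟨k, Nat.lt_of_succ_lt h⟩)) ∧
          (∀ k : Fin L, Bt *ᵥ θ k = Cg *ᵥ uwy.1 k - Cd *ᵥ uwy.2.1 k) ∧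
          (∀ k : Fin L, uwy.2.2 k =
            dcOutput q m (e k.1)
              ((∑ j, uwy.2.1 k j) - ∑ j, uwy.1 k j) (Bf *ᵥ θ k))} ∧
      Module.finrank ℝ S = L * (nu + nw) + q := by
  have hBdet : IsUnit Bt.det := (Matrix.isUnit_iff_isUnit_det Bt).mp hB
  set Φ := phi q nu nw n m L δ Bt Bf Cs Cg Cd with hΦ
  have hΦapp : ∀ p, Φ p = (p.1, p.2.1, fun k : Fin L =>
      dcOutput q m (efun q nu L δ Cs p.1 p.2.2 k.1)
        ((∑ j, p.2.1 k j) - ∑ j, p.1 k j)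
        (Bf *ᵥ (Bt⁻¹ *ᵥ (Cg *ᵥ p.1 k - Cd *ᵥ p.2.1 k)))) := fun p => rfl
  refine ⟨LinearMap.range Φ, ?_, ?_⟩
  · ext uwy
    simp only [SetLike.mem_coe, LinearMap.mem_range, Set.mem_setOf_eq]
    constructor
    · rintro ⟨p, rfl⟩
      rw [hΦapp]
      refine ⟨efun q nu L δ Cs p.1 p.2.2,
        fun k => Bt⁻¹ *ᵥ (Cg *ᵥ p.1 k - Cd *ᵥ p.2.1 k), ?_, ?_, ?_⟩
      · intro k h
        exact efun_succ q nu L δ Cs p.1 p.2.2 k (Nat.lt_of_succ_lt h)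
      · intro k
        rw [Matrix.mulVec_mulVec, Matrix.mul_nonsing_inv _ hBdet, Matrix.one_mulVec]
      · intro k; rfl
    · rintro ⟨e, θ, he, hθ, hy⟩
      refine ⟨(uwy.1, uwy.2.1, e 0), ?_⟩
      have hθ' : ∀ k : Fin L, Bt⁻¹ *ᵥ (Cg *ᵥ uwy.1 k - Cd *ᵥ uwy.2.1 k) = θ k := by
        intro k
        rw [← hθ k, Matrix.mulVec_mulVec, Matrix.nonsing_inv_mul _ hBdet, Matrix.one_mulVec]
      have he' : ∀ k : ℕ, k < L → efun q nu L δ Cs uwy.1 (e 0) k = e k := by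
        intro k
        induction k with
        | zero => intro _; exact efun_zero q nu L δ Cs uwy.1 (e 0)
        | succ k ih =>
          intro h
          rw [efun_succ q nu L δ Cs uwy.1 (e 0) k (Nat.lt_of_succ_lt h),
            ih (Nat.lt_of_succ_lt h), he k h]
      rw [hΦapp]
      refine Prod.ext rfl (Prod.ext rfl ?_)
      funext k
      show dcOutput q m (efun q nu L δ Cs uwy.1 (e 0) k.1)
          ((∑ j, uwy.2.1 k j) - ∑ j, uwy.1 k j)
          (Bf *ᵥ (Bt⁻¹ *ᵥ (Cg *ᵥ uwy.1 k - Cd *ᵥ uwy.2.1 k))) = uwy.2.2 k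
      rw [hy k, hθ' k, he' k.1 k.2]
  · have hinj : Function.Injective Φ := by
      intro p p' hpp
      rw [hΦapp p, hΦapp p'] at hpp
      have h1 : p.1 = p'.1 := congrArg (fun x => x.1) hpp
      have h2 : p.2.1 = p'.2.1 := congrArg (fun x => x.2.1) hpp
      have h3 : p.2.2 = p'.2.2 := by
        funext j
        have h := congrFun (congrFun (congrArg (fun x => x.2.2) hpp) ⟨0, hL⟩)
          (Fin.castAdd m (Fin.castAdd 1 j))
        simpa [dcOutput_left, efun_zero] using h
      exact Prod.ext h1 (Prod.ext h2 h3)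
    rw [LinearMap.finrank_range_of_inj hinj]
    have h1 : Module.finrank ℝ (Fin L → Fin nu → ℝ) = L * nu := by
      rw [Module.finrank_pi_fintype]
      simp [Module.finrank_pi, Finset.sum_const, mul_comm]
    have h2 : Module.finrank ℝ (Fin L → Fin nw → ℝ) = L * nw := by
      rw [Module.finrank_pi_fintype]
      simp [Module.finrank_pi, Finset.sum_const, mul_comm]
    have h3 : Module.finrank ℝ (Fin q → ℝ) = q := by simp [Module.finrank_pi]
    rw [Module.finrank_prod, Module.finrank_prod, h1, h2, h3]
    ring
end
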